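/- Let F be a field, and let U be the subgroup of PSL₂(F) consisting of the classes of all matrices [[1, x],[0, 1]] with x ∈ F. For v ∈ F let h̄_v ∈ PSL₂(F) denote the class of the matrix [[v, −1],[1, 0]] ∈ SL₂(F). If v, z ∈ F satisfy h̄_v U h̄_v⁻¹ = h̄_z U h̄_z⁻¹ (as subgroups of PSL₂(F)), then v = z. -/

import Mathlib

open Matrix MatrixGroups

/-- The natural projection `SL₂(R) → PSL₂(R)`, sending a matrix to its class modulo
the center. -/
def pslmk {R : Type*} [CommRing R] :
    Matrix.SpecialLinearGroup (Fin 2) R →* Matrix.ProjectiveSpecialLinearGroup (Fin 2) R :=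
  QuotientGroup.mk' (Subgroup.center (Matrix.SpecialLinearGroup (Fin 2) R))

/-!
Conjugating `[[1, x], [0, 1]]` by `[[v, -1], [1, 0]]` gives `[[1 - v x, v² x], [-x, 1 + v x]]`.
If the conjugate subgroups agree, the conjugate of `[[1, 1], [0, 1]]` by `h_v` equals, up to a
central scalar `r` with `r² = 1`, the conjugate of some `[[1, x], [0, 1]]` by `h_z`. Comparing
entries gives `x = r` and `z - v = r - 1 = 1 - r`, so `(z - v)² = 0`.
-/

namespace Matrix.SpecialLinearGroup

variable {R : Type*} [CommRing R]

def unipotent (x : R) : SL(2, R) :=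
  ⟨!![1, x; 0, 1], by simp⟩

theorem coe_mul_unipotent_mul_inv {h : SL(2, R)} {v : R}
    (hh : (h : Matrix (Fin 2) (Fin 2) R) = !![v, -1; 1, 0]) (x : R) :
    ((h * unipotent x * h⁻¹ : SL(2, R)) : Matrix (Fin 2) (Fin 2) R) =
      !![1 - v * x, v ^ 2 * x; -x, 1 + v * x] := by
  rw [coe_mul, coe_mul, coe_inv, hh, adjugate_fin_two, unipotent]
  ext i j
  fin_cases i <;> fin_cases j <;> simp <;> ring

theorem exists_coe_eq_smul_of_pslmk_eq {A B : SL(2, R)} (hAB : pslmk A = pslmk B) :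
    ∃ r : R, r ^ 2 = 1 ∧ (B : Matrix (Fin 2) (Fin 2) R) = r • (A : Matrix (Fin 2) (Fin 2) R) := by
  obtain ⟨c, hc, rfl⟩ := (QuotientGroup.mk'_eq_mk' _).mp hAB
  obtain ⟨r, hr, hrc⟩ := mem_center_iff.mp hc
  refine ⟨r, by simpa using hr, ?_⟩
  rw [coe_mul, ← hrc, scalar_apply, smul_eq_mul_diagonal]

end Matrix.SpecialLinearGroup

open Matrix.SpecialLinearGroup

theorem eq_of_conj_unipotent_eq_smul {R : Type*} [CommRing R] [IsReduced R] {v z x r : R}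
    (hr : r ^ 2 = 1)
    (h : !![1 - z * x, z ^ 2 * x; -x, 1 + z * x] = r • !![1 - v, v ^ 2; -1, 1 + v]) :
    v = z := by
  have hx : x = r := by simpa using congrFun₂ h 1 0
  subst hx
  have h00 : 1 - z * x = x * (1 - v) := by simpa using congrFun₂ h 0 0
  have h11 : 1 + z * x = x * (1 + v) := by simpa using congrFun₂ h 1 1
  have hsub : z - v = x - 1 := by linear_combination -x * h00 - (z - v + 1) * hr
  have hadd : z - v = 1 - x := by linear_combination x * h11 - (z - v - 1) * hr
  have hsq : (z - v) ^ 2 = 0 := by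
    linear_combination (z - v) * hadd + (1 - x) * hsub - hr + hadd - hsub
  exact (sub_eq_zero.mp (pow_eq_zero_iff two_ne_zero |>.mp hsq)).symm

/-- Let `F` be a field and `U ≤ PSL₂(F)` the subgroup of classes of the matrices
`[[1, x], [0, 1]]`. For `v : F` let `h̄_v` be the class of `[[v, -1], [1, 0]]`. If
`h̄_v U h̄_v⁻¹ = h̄_z U h̄_z⁻¹` then `v = z`. -/
theorem conj_unipotent_inj (F : Type*) [Field F]
    (U : Subgroup (Matrix.ProjectiveSpecialLinearGroup (Fin 2) F))
    (hU : (U : Set (Matrix.ProjectiveSpecialLinearGroup (Fin 2) F)) =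
      {g | ∃ x : F, ∃ h : Matrix.det !![1, x; 0, 1] = 1, g = pslmk ⟨!![1, x; 0, 1], h⟩})
    (v z : F) (hv hz : Matrix.SpecialLinearGroup (Fin 2) F)
    (hhv : (hv : Matrix (Fin 2) (Fin 2) F) = !![v, -1; 1, 0])
    (hhz : (hz : Matrix (Fin 2) (Fin 2) F) = !![z, -1; 1, 0])
    (heq : Subgroup.map (MulAut.conj (pslmk hv)).toMonoidHom U =
           Subgroup.map (MulAut.conj (pslmk hz)).toMonoidHom U) :
    v = z := by
  have mem_U (g) : g ∈ U ↔ ∃ x : F, g = pslmk (unipotent x) := by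
    rw [← SetLike.mem_coe, hU]
    exact ⟨fun ⟨x, _, hg⟩ => ⟨x, hg⟩, fun ⟨x, hg⟩ => ⟨x, (unipotent x).2, hg⟩⟩
  obtain ⟨g, hgU, hg⟩ :
      pslmk (hv * unipotent 1 * hv⁻¹) ∈ U.map (MulAut.conj (pslmk hz)).toMonoidHom := by
    rw [← heq]
    exact ⟨_, (mem_U _).2 ⟨1, rfl⟩, by simp⟩
  obtain ⟨x, rfl⟩ := (mem_U g).1 hgU
  obtain ⟨r, hr, hmat⟩ := exists_coe_eq_smul_of_pslmk_eq
    (A := hv * unipotent 1 * hv⁻¹) (B := hz * unipotent x * hz⁻¹) (by simpa using hg.symm)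
  rw [coe_mul_unipotent_mul_inv hhz, coe_mul_unipotent_mul_inv hhv] at hmat
  exact eq_of_conj_unipotent_eq_smul hr (by simpa only [mul_one] using hmat)
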